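/- (Proposition 1, connectivity metric.) Let H = (V, N, w, c) be a hypergraph, let ε ≥ 0 and k ≥ 1, and let Π be an ε-balanced k-way partition of H whose connectivity metric value (λ − 1)_H(Π) is minimum among all ε-balanced k-way partitions of H. Let u and v be two distinct nodes that lie in the same block of Π, and let H' be the hypergraph obtained from H by contracting u and v. Then the minimum of the connectivity metric over all ε-balanced k-way partitions of H' equals (λ − 1)_H(Π). -/

import Mathlib

/-!
Contracting `u` and `v` is taking the image of `H` under the map `v ↦ u`. Pulling a partition
`π'` of the contracted hypergraph back along this map gives a partition of `H` with the same
connectivity of every hyperedge, the same block weights and the same total weight, so the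
balanced partitions of `H'` are exactly the balanced partitions of `H` that keep `u` and `v`
together, with the same objective. `Π` is one of them and is optimal among all of them.
-/

open Finset

/-- A hypergraph `H = (V, N, w, c)`: a finite node set, an indexed family of
hyperedges each with a nonempty pin set contained in the node set, a
nonnegative node-weight function and a nonnegative hyperedge-cost function. -/
structure WHypergraph (V E : Type*) [DecidableEq V] [Fintype E] where
  nodes : Finset V
  pins : E → Finset V
  pins_subset : ∀ e, pins e ⊆ nodes
  pins_nonempty : ∀ e, (pins e).Nonempty
  w : V → ℝ
  w_nonneg : ∀ x, 0 ≤ w x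
  c : E → ℝ
  c_nonneg : ∀ e, 0 ≤ c e

namespace WHypergraph

variable {V E : Type*} [DecidableEq V] [Fintype E]

/-- `π` is a `k`-way partition of `H`: every node is assigned one of the `k`
blocks (blocks are automatically pairwise disjoint with union `V`), and every
block is nonempty. -/
def IsPartition (H : WHypergraph V E) (k : ℕ) (π : V → Fin k) : Prop :=
  ∀ i : Fin k, ∃ x ∈ H.nodes, π x = i

/-- The connectivity set `Λ(e)` of a hyperedge under a partition: the set of
blocks containing at least one pin of `e`. -/
def connSet (H : WHypergraph V E) {k : ℕ} (π : V → Fin k) (e : E) : Finset (Fin k) :=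
  (H.pins e).image π

/-- The connectivity `λ(e) = |Λ(e)|`. -/
def connectivity (H : WHypergraph V E) {k : ℕ} (π : V → Fin k) (e : E) : ℕ :=
  (H.connSet π e).card

/-- A hyperedge is a cut hyperedge if its connectivity exceeds one. -/
def IsCut (H : WHypergraph V E) {k : ℕ} (π : V → Fin k) (e : E) : Prop :=
  1 < H.connectivity π e

/-- The connectivity metric `(λ − 1)_H(Π) = Σ_e (λ(e) − 1)·c(e)`. -/
def connMetric (H : WHypergraph V E) {k : ℕ} (π : V → Fin k) : ℝ :=
  ∑ e : E, ((H.connectivity π e : ℝ) - 1) * H.c e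

/-- The cut metric `cut_H(Π) = Σ_{e cut} c(e)`. -/
def cutMetric (H : WHypergraph V E) {k : ℕ} (π : V → Fin k) : ℝ :=
  ∑ e ∈ Finset.univ.filter (fun e => 1 < H.connectivity π e), H.c e

/-- The weight of block `i` of the partition `π`. -/
def blockWeight (H : WHypergraph V E) {k : ℕ} (π : V → Fin k) (i : Fin k) : ℝ :=
  ∑ x ∈ H.nodes.filter (fun x => π x = i), H.w x

/-- The total node weight of `H`. -/
def totalWeight (H : WHypergraph V E) : ℝ :=
  ∑ x ∈ H.nodes, H.w x

/-- `π` is `ε`-balanced: every block weighs at most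
`(1+ε)·⌈(Σ_{v∈V} w(v))/k⌉`. -/
def IsBalanced (H : WHypergraph V E) (ε : ℝ) {k : ℕ} (π : V → Fin k) : Prop :=
  ∀ i : Fin k, H.blockWeight π i ≤ (1 + ε) * (⌈H.totalWeight / (k : ℝ)⌉ : ℝ)

/-- Contraction of the two nodes `u` and `v` (merging `v` into `u`):
`v` is removed from the node set, `w(u)` becomes `w(u) + w(v)`, and in every
hyperedge containing `v` the pin `v` is replaced by `u`; costs are unchanged. -/
def contract (H : WHypergraph V E) (u v : V) : WHypergraph V E where
  nodes := insert u (H.nodes.erase v)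
  pins := fun e => if v ∈ H.pins e then insert u ((H.pins e).erase v) else H.pins e
  pins_subset := by
    intro e x hx
    try dsimp only at hx
    by_cases h : v ∈ H.pins e
    · rw [if_pos h] at hx
      rcases Finset.mem_insert.mp hx with rfl | hx'
      · exact Finset.mem_insert_self _ _
      · rcases Finset.mem_erase.mp hx' with ⟨hxv, hxp⟩
        exact Finset.mem_insert_of_mem (Finset.mem_erase.mpr ⟨hxv, H.pins_subset e hxp⟩)
    · rw [if_neg h] at hx
      have hxv : x ≠ v := fun hEq => h (hEq ▸ hx)
      exact Finset.mem_insert_of_mem (Finset.mem_erase.mpr ⟨hxv, H.pins_subset e hx⟩)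
  pins_nonempty := by
    intro e
    try dsimp only
    by_cases h : v ∈ H.pins e
    · rw [if_pos h]; exact Finset.insert_nonempty _ _
    · rw [if_neg h]; exact H.pins_nonempty e
  w := fun x => if x = u then H.w u + H.w v else H.w x
  w_nonneg := by
    intro x
    try dsimp only
    split
    · exact add_nonneg (H.w_nonneg u) (H.w_nonneg v)
    · exact H.w_nonneg x
  c := H.c
  c_nonneg := H.c_nonneg


/-- Contraction of a whole set `S` of nodes into a single new node `uS`:
the resulting node set is `(V \ S) ∪ {uS}`, the new node weighs
`Σ_{v∈S} w(v)`, and in every hyperedge meeting `S` the pins in `S` are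
replaced by `uS`; costs are unchanged. -/
def contractSet (H : WHypergraph V E) (S : Finset V) (uS : V) : WHypergraph V E where
  nodes := insert uS (H.nodes \ S)
  pins := fun e => if (H.pins e ∩ S).Nonempty then insert uS (H.pins e \ S) else H.pins e
  pins_subset := by
    intro e x hx
    try dsimp only at hx
    by_cases h : (H.pins e ∩ S).Nonempty
    · rw [if_pos h] at hx
      rcases Finset.mem_insert.mp hx with rfl | hx'
      · exact Finset.mem_insert_self _ _
      · rcases Finset.mem_sdiff.mp hx' with ⟨hxp, hxS⟩
        exact Finset.mem_insert_of_mem (Finset.mem_sdiff.mpr ⟨H.pins_subset e hxp, hxS⟩)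
    · rw [if_neg h] at hx
      have hxS : x ∉ S := fun hmem =>
        h ⟨x, Finset.mem_inter.mpr ⟨hx, hmem⟩⟩
      exact Finset.mem_insert_of_mem (Finset.mem_sdiff.mpr ⟨H.pins_subset e hx, hxS⟩)
  pins_nonempty := by
    intro e
    try dsimp only
    by_cases h : (H.pins e ∩ S).Nonempty
    · rw [if_pos h]; exact Finset.insert_nonempty _ _
    · rw [if_neg h]; exact H.pins_nonempty e
  w := fun x => if x = uS then ∑ y ∈ S, H.w y else H.w x
  w_nonneg := by
    intro x
    try dsimp only
    split
    · exact Finset.sum_nonneg fun y _ => H.w_nonneg y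
    · exact H.w_nonneg x
  c := H.c
  c_nonneg := H.c_nonneg

end WHypergraph

namespace WHypergraph

variable {V E : Type*} [DecidableEq V] [Fintype E]

/-- `H.contract u v` is the image of `H` under this map. -/
def contractMap (u v : V) (x : V) : V :=
  if x = v then u else x

lemma comp_contractMap_of_eq {α : Type*} {π : V → α} {u v : V} (h : π u = π v) :
    π ∘ contractMap u v = π := by
  funext x
  by_cases hx : x = v <;> simp [contractMap, hx, h]

lemma image_contractMap_of_notMem {s : Finset V} (u : V) {v : V} (hv : v ∉ s) :
    s.image (contractMap u v) = s :=
  (image_congr fun _ hx => if_neg (ne_of_mem_of_not_mem hx hv)).trans image_id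

lemma image_contractMap_of_mem {s : Finset V} (u : V) {v : V} (hv : v ∈ s) :
    s.image (contractMap u v) = insert u (s.erase v) := by
  conv_lhs => rw [← insert_erase hv]
  rw [image_insert, image_contractMap_of_notMem u (notMem_erase v s), contractMap, if_pos rfl]

lemma pins_contract (H : WHypergraph V E) (u v : V) (e : E) :
    (H.contract u v).pins e = (H.pins e).image (contractMap u v) := by
  by_cases hv : v ∈ H.pins e
  · simp only [contract, if_pos hv, image_contractMap_of_mem u hv]
  · simp only [contract, if_neg hv, image_contractMap_of_notMem u hv]

lemma nodes_contract (H : WHypergraph V E) (u : V) {v : V} (hv : v ∈ H.nodes) :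
    (H.contract u v).nodes = H.nodes.image (contractMap u v) :=
  (image_contractMap_of_mem u hv).symm

lemma connMetric_contract (H : WHypergraph V E) {k : ℕ} (u v : V) (π' : V → Fin k) :
    (H.contract u v).connMetric π' = H.connMetric (π' ∘ contractMap u v) := by
  simp only [connMetric, connectivity, connSet, pins_contract, image_image]
  rfl

lemma isPartition_contract (H : WHypergraph V E) {k : ℕ} (u : V) {v : V} (hv : v ∈ H.nodes)
    (π' : V → Fin k) :
    (H.contract u v).IsPartition k π' ↔ H.IsPartition k (π' ∘ contractMap u v) := by
  simp only [IsPartition, nodes_contract H u hv, exists_mem_image, Function.comp_apply]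

lemma sum_filter_w_contract (H : WHypergraph V E) {u v : V} (hu : u ∈ H.nodes)
    (hv : v ∈ H.nodes) (huv : u ≠ v) (p : V → Prop) [DecidablePred p] :
    ∑ y ∈ (H.contract u v).nodes with p y, (H.contract u v).w y
      = ∑ x ∈ H.nodes with p (contractMap u v x), H.w x := by
  have hu' : u ∈ H.nodes.erase v := mem_erase.mpr ⟨huv, hu⟩
  have hrest : ∑ x ∈ (H.nodes.erase v).erase u, (if p x then (H.contract u v).w x else 0)
      = ∑ x ∈ (H.nodes.erase v).erase u, if p (contractMap u v x) then H.w x else 0 :=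
    sum_congr rfl fun x hx => by
      obtain ⟨hxu, hx⟩ := mem_erase.mp hx
      simp only [contract, contractMap, if_neg hxu, if_neg (mem_erase.mp hx).1]
  rw [nodes_contract H u hv, image_contractMap_of_mem u hv, insert_eq_of_mem hu', sum_filter,
    sum_filter, ← add_sum_erase _ _ hv, ← add_sum_erase _ _ hu', ← add_sum_erase _ _ hu', hrest]
  simp only [contractMap, contract, if_pos, if_neg huv]
  split_ifs <;> ring

lemma totalWeight_contract (H : WHypergraph V E) {u v : V} (hu : u ∈ H.nodes)
    (hv : v ∈ H.nodes) (huv : u ≠ v) :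
    (H.contract u v).totalWeight = H.totalWeight := by
  simpa [totalWeight] using H.sum_filter_w_contract hu hv huv (fun _ => True)

lemma blockWeight_contract (H : WHypergraph V E) {k : ℕ} {u v : V} (hu : u ∈ H.nodes)
    (hv : v ∈ H.nodes) (huv : u ≠ v) (π' : V → Fin k) (i : Fin k) :
    (H.contract u v).blockWeight π' i = H.blockWeight (π' ∘ contractMap u v) i :=
  H.sum_filter_w_contract hu hv huv (π' · = i)

lemma isBalanced_contract (H : WHypergraph V E) {k : ℕ} {u v : V} (hu : u ∈ H.nodes)
    (hv : v ∈ H.nodes) (huv : u ≠ v) (ε : ℝ) (π' : V → Fin k) :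
    (H.contract u v).IsBalanced ε π' ↔ H.IsBalanced ε (π' ∘ contractMap u v) := by
  simp only [IsBalanced, blockWeight_contract H hu hv huv, totalWeight_contract H hu hv huv]

end WHypergraph

theorem contract_min_connMetric_general {V E : Type*} [DecidableEq V] [Fintype E]
    (H : WHypergraph V E) (ε : ℝ) (k : ℕ)
    (π : V → Fin k)
    (hπ : H.IsPartition k π) (hbal : H.IsBalanced ε π)
    (hopt : ∀ π' : V → Fin k, H.IsPartition k π' → H.IsBalanced ε π' →
      H.connMetric π ≤ H.connMetric π')
    (u v : V) (hu : u ∈ H.nodes) (hv : v ∈ H.nodes) (huv : u ≠ v)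
    (hsame : π u = π v) :
    IsLeast {r : ℝ | ∃ π' : V → Fin k,
        (H.contract u v).IsPartition k π' ∧ (H.contract u v).IsBalanced ε π' ∧
        r = (H.contract u v).connMetric π'}
      (H.connMetric π) := by
  have hfix := WHypergraph.comp_contractMap_of_eq hsame
  refine ⟨⟨π, ?_, ?_, ?_⟩, ?_⟩
  · rwa [H.isPartition_contract u hv, hfix]
  · rwa [H.isBalanced_contract hu hv huv, hfix]
  · rw [H.connMetric_contract, hfix]
  · rintro _ ⟨π', hpart, hbal', rfl⟩
    rw [H.connMetric_contract]
    exact hopt _ ((H.isPartition_contract u hv π').1 hpart)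
      ((H.isBalanced_contract hu hv huv ε π').1 hbal')

/-- Proposition 1, connectivity metric: if `Π` minimizes the
connectivity metric among all `ε`-balanced `k`-way partitions of `H`, and
`u, v` are distinct nodes in the same block of `Π`, then the minimum of the
connectivity metric over all `ε`-balanced `k`-way partitions of the hypergraph
obtained by contracting `u` and `v` equals `(λ − 1)_H(Π)`. -/
theorem contract_min_connMetric {V E : Type*} [DecidableEq V] [Fintype E]
    (H : WHypergraph V E) (ε : ℝ) (hε : 0 ≤ ε) (k : ℕ) (hk : 1 ≤ k)
    (π : V → Fin k)
    (hπ : H.IsPartition k π) (hbal : H.IsBalanced ε π)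
    (hopt : ∀ π' : V → Fin k, H.IsPartition k π' → H.IsBalanced ε π' →
      H.connMetric π ≤ H.connMetric π')
    (u v : V) (hu : u ∈ H.nodes) (hv : v ∈ H.nodes) (huv : u ≠ v)
    (hsame : π u = π v) :
    IsLeast {r : ℝ | ∃ π' : V → Fin k,
        (H.contract u v).IsPartition k π' ∧ (H.contract u v).IsBalanced ε π' ∧
        r = (H.contract u v).connMetric π'}
      (H.connMetric π) :=
  contract_min_connMetric_general H ε k π hπ hbal hopt u v hu hv huv hsame
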